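/- arXiv:1805.03367 — 4 statements merged into one kernel-verified Lean document; each statement's English description precedes it below -/
import Mathlib

section
/- Let P and Q be probability measures on a finite set Ω with Q fully supported, and let c > 0. Define d := sup over probability measures S of (c·D(S_Y‖Q) − D(S‖P)) where S_Y is the pushforward of S under a fixed stochastic kernel K. Then d = sup over strictly positive functions f on the target space of (ln E_P[exp(c·E_{K(·)}[ln f])] − c·ln E_Q[f]). -/
open Finset

/-- Kullback-Leibler divergence between two probability vectors on a finite set,
with natural logarithm and the convention `0 * log (0/p) = 0`. -/
noncomputable def klDivFin {α : Type*} [Fintype α] (S P : α → ℝ) : ℝ :=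
  ∑ x, S x * Real.log (S x / P x)

lemma kl_nonneg {α : Type*} [Fintype α] {S T : α → ℝ}
    (hS : ∀ x, 0 ≤ S x) (hS1 : ∑ x, S x = 1)
    (hT : ∀ x, 0 ≤ T x) (hT1 : ∑ x, T x ≤ 1)
    (hAC : ∀ x, 0 < S x → 0 < T x) :
    0 ≤ klDivFin S T := by
  have key : ∀ x ∈ Finset.univ (α := α), S x - T x ≤ S x * Real.log (S x / T x) := by
    intro x _
    rcases eq_or_lt_of_le (hS x) with h | h
    · rw [show S x = 0 from h.symm]
      simpa using hT x
    · have hTx := hAC x h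
      have h1 := Real.log_le_sub_one_of_pos (div_pos hTx h)
      have h2 : Real.log (S x / T x) = - Real.log (T x / S x) := by
        rw [Real.log_div hTx.ne' h.ne', Real.log_div h.ne' hTx.ne']; ring
      have h3 : T x / S x * S x = T x := div_mul_cancel₀ _ h.ne'
      nlinarith
  have h3 : ∑ x, (S x - T x) ≤ klDivFin S T := Finset.sum_le_sum key
  rw [Finset.sum_sub_distrib, hS1] at h3
  linarith

lemma gibbs {α : Type*} [Fintype α] {S μ g : α → ℝ}
    (hS : ∀ x, 0 ≤ S x) (hS1 : ∑ x, S x = 1)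
    (hμ : ∀ x, 0 ≤ μ x) (hg : ∀ x, 0 ≤ g x)
    (hAC : ∀ x, 0 < S x → 0 < μ x * g x) :
    ∑ x, S x * Real.log (g x) - Real.log (∑ x, μ x * g x) ≤ klDivFin S μ := by
  obtain ⟨x0, hx0⟩ : ∃ x, 0 < S x := by
    by_contra h
    push_neg at h
    have : ∑ x, S x = 0 := Finset.sum_eq_zero fun x _ => le_antisymm (h x) (hS x)
    rw [hS1] at this; norm_num at this
  set Z := ∑ x, μ x * g x with hZdef
  have hZpos : 0 < Z := Finset.sum_pos' (fun x _ => mul_nonneg (hμ x) (hg x))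
    ⟨x0, Finset.mem_univ x0, hAC x0 hx0⟩
  set T := fun x => μ x * g x / Z with hTdef
  have hT1 : ∑ x, T x = 1 := by
    simp only [hTdef, ← Finset.sum_div]; exact div_self hZpos.ne'
  have hkl := kl_nonneg hS hS1
    (fun x => div_nonneg (mul_nonneg (hμ x) (hg x)) hZpos.le) hT1.le
    (fun x hx => div_pos (hAC x hx) hZpos)
  have hid : ∑ x, S x * Real.log (S x / T x)
      = ∑ x, S x * Real.log (S x / μ x) - ∑ x, S x * Real.log (g x) + Real.log Z := by
    have key : ∀ x ∈ Finset.univ (α := α), S x * Real.log (S x / T x)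
        = S x * Real.log (S x / μ x) - S x * Real.log (g x) + S x * Real.log Z := by
      intro x _
      rcases eq_or_lt_of_le (hS x) with h | h
      · rw [show S x = 0 from h.symm]; ring
      · have hμg := hAC x h
        have hμx : 0 < μ x := by
          rcases mul_pos_iff.mp hμg with ⟨h1, _⟩ | ⟨h1, _⟩
          · exact h1
          · exact absurd (hμ x) (not_le.mpr h1)
        have hgx : 0 < g x := by
          rcases mul_pos_iff.mp hμg with ⟨_, h1⟩ | ⟨_, h1⟩
          · exact h1
          · exact absurd (hg x) (not_le.mpr h1)
        have e1 : S x / T x = S x / μ x / g x * Z := by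
          simp only [hTdef]; field_simp
        rw [e1, Real.log_mul (by positivity) hZpos.ne',
          Real.log_div (by positivity) hgx.ne']
        ring
    have := Finset.sum_congr rfl key
    rw [this, Finset.sum_add_distrib, Finset.sum_sub_distrib, ← Finset.sum_mul, hS1, one_mul]
  have hkl2 : 0 ≤ ∑ x, S x * Real.log (S x / T x) := hkl
  unfold klDivFin
  linarith [hkl2, hid]

lemma sum_log_exp {Ω Y : Type*} [Fintype Ω] [Fintype Y]
    (S : Ω → ℝ) (K : Ω → Y → ℝ) (f : Y → ℝ) (c : ℝ) :
    ∑ x, S x * Real.log (Real.exp (c * ∑ y, K x y * Real.log (f y)))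
      = c * ∑ y, (∑ x, S x * K x y) * Real.log (f y) := by
  simp only [Real.log_exp, Finset.mul_sum, Finset.sum_mul]
  rw [Finset.sum_comm]
  exact Finset.sum_congr rfl fun x _ => Finset.sum_congr rfl fun y _ => by ring

theorem functional_entropic_duality {Ω Y : Type*} [Fintype Ω] [Fintype Y]
    (P : Ω → ℝ) (Q : Y → ℝ) (K : Ω → Y → ℝ) (c : ℝ) (hc : 0 < c)
    (hP : ∀ x, 0 ≤ P x) (hP1 : ∑ x, P x = 1)
    (hQ : ∀ y, 0 < Q y) (hQ1 : ∑ y, Q y = 1)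
    (hK : ∀ x y, 0 ≤ K x y) (hK1 : ∀ x, ∑ y, K x y = 1) :
    sSup {v : ℝ | ∃ S : Ω → ℝ, (∀ x, 0 ≤ S x) ∧ (∑ x, S x = 1) ∧
        (∀ x, P x = 0 → S x = 0) ∧
        v = c * klDivFin (fun y => ∑ x, S x * K x y) Q - klDivFin S P} =
    sSup {v : ℝ | ∃ f : Y → ℝ, (∀ y, 0 < f y) ∧
        v = Real.log (∑ x, P x * Real.exp (c * ∑ y, K x y * Real.log (f y)))
            - c * Real.log (∑ y, Q y * f y)} := by
  classical
  set A : Set ℝ := {v : ℝ | ∃ S : Ω → ℝ, (∀ x, 0 ≤ S x) ∧ (∑ x, S x = 1) ∧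
      (∀ x, P x = 0 → S x = 0) ∧
      v = c * klDivFin (fun y => ∑ x, S x * K x y) Q - klDivFin S P} with hAdef
  set B : Set ℝ := {v : ℝ | ∃ f : Y → ℝ, (∀ y, 0 < f y) ∧
      v = Real.log (∑ x, P x * Real.exp (c * ∑ y, K x y * Real.log (f y)))
          - c * Real.log (∑ y, Q y * f y)} with hBdef
  have hQ1y : ∀ y, Q y ≤ 1 := fun y =>
    hQ1 ▸ Finset.single_le_sum (fun y _ => (hQ y).le) (mem_univ y)
  have hK1y : ∀ x y, K x y ≤ 1 := fun x y =>
    (hK1 x) ▸ Finset.single_le_sum (fun y _ => hK x y) (mem_univ y)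
  have hL0 : ∀ y, 0 ≤ -Real.log (Q y) := fun y =>
    neg_nonneg.mpr (Real.log_nonpos (hQ y).le (hQ1y y))
  set L : ℝ := ∑ y, -Real.log (Q y) with hLdef
  have hpush : ∀ S : Ω → ℝ, (∀ x, 0 ≤ S x) → (∑ x, S x = 1) →
      (∀ y, 0 ≤ ∑ x, S x * K x y) ∧ ((∑ y, ∑ x, S x * K x y) = 1) ∧
      (∀ y, (∑ x, S x * K x y) ≤ 1) := by
    intro S hS0 hS1
    refine ⟨fun y => Finset.sum_nonneg fun x _ => mul_nonneg (hS0 x) (hK x y), ?_, fun y => ?_⟩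
    · rw [Finset.sum_comm]
      calc ∑ x, ∑ y, S x * K x y = ∑ x, S x * ∑ y, K x y :=
            Finset.sum_congr rfl fun x _ => (Finset.mul_sum _ _ _).symm
        _ = 1 := by simp only [hK1, mul_one]; exact hS1
    · calc ∑ x, S x * K x y ≤ ∑ x, S x :=
            Finset.sum_le_sum fun x _ => by nlinarith [hS0 x, hK x y, hK1y x y]
        _ = 1 := hS1
  have claimA : ∀ v ∈ A, v ≤ c * L := by
    rintro v ⟨S, hS0, hS1, hSP, rfl⟩
    obtain ⟨hSY0, hSY1, hSYle⟩ := hpush S hS0 hS1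
    have hklSP : 0 ≤ klDivFin S P :=
      kl_nonneg hS0 hS1 hP hP1.le
        (fun x hx => lt_of_le_of_ne (hP x)
          (fun h => by rw [hSP x h.symm] at hx; exact lt_irrefl 0 hx))
    have hklQ : klDivFin (fun y => ∑ x, S x * K x y) Q ≤ L := by
      unfold klDivFin
      rw [hLdef]
      beta_reduce
      apply Finset.sum_le_sum
      intro y _
      rcases eq_or_lt_of_le (hSY0 y) with h | h
      · rw [← h]
        simpa using hL0 y
      · have hlogs : Real.log (∑ x, S x * K x y) ≤ 0 :=
          Real.log_nonpos (hSY0 y) (hSYle y)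
        have h1 : Real.log ((∑ x, S x * K x y) / Q y) ≤ -Real.log (Q y) := by
          rw [Real.log_div h.ne' (hQ y).ne']; linarith
        calc (∑ x, S x * K x y) * Real.log ((∑ x, S x * K x y) / Q y)
            ≤ (∑ x, S x * K x y) * (-Real.log (Q y)) :=
              mul_le_mul_of_nonneg_left h1 (hSY0 y)
          _ ≤ 1 * (-Real.log (Q y)) :=
              mul_le_mul_of_nonneg_right (hSYle y) (hL0 y)
          _ = -Real.log (Q y) := one_mul _
    have := mul_le_mul_of_nonneg_left hklQ hc.le
    linarith
  have hAne : A.Nonempty :=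
    ⟨_, ⟨P, hP, hP1, fun _ h => h, rfl⟩⟩
  have hAbdd : BddAbove A := ⟨c * L, fun v hv => claimA v hv⟩
  have claimBA : ∀ v ∈ B, ∃ a ∈ A, v ≤ a := by
    rintro v ⟨f, hf, rfl⟩
    set g : Ω → ℝ := fun x => Real.exp (c * ∑ y, K x y * Real.log (f y)) with hgdef
    have hg0 : ∀ x, 0 < g x := fun x => Real.exp_pos _
    obtain ⟨x0, hx0⟩ : ∃ x, 0 < P x := by
      by_contra h; push_neg at h
      have : ∑ x, P x = 0 := Finset.sum_eq_zero fun x _ => le_antisymm (h x) (hP x)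
      rw [hP1] at this; norm_num at this
    set Z : ℝ := ∑ x, P x * g x with hZdef
    have hZ : 0 < Z := Finset.sum_pos' (fun x _ => mul_nonneg (hP x) (hg0 x).le)
      ⟨x0, mem_univ x0, mul_pos hx0 (hg0 x0)⟩
    set S : Ω → ℝ := fun x => P x * g x / Z with hSdef
    have hS0 : ∀ x, 0 ≤ S x := fun x => div_nonneg (mul_nonneg (hP x) (hg0 x).le) hZ.le
    have hS1 : ∑ x, S x = 1 := by
      simp only [hSdef, ← Finset.sum_div]; exact div_self hZ.ne'
    have hSP : ∀ x, P x = 0 → S x = 0 := fun x h => by simp [hSdef, h]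
    obtain ⟨hSY0, hSY1, _⟩ := hpush S hS0 hS1
    have hD : klDivFin S P = c * (∑ y, (∑ x, S x * K x y) * Real.log (f y)) - Real.log Z := by
      have key : ∀ x ∈ Finset.univ (α := Ω), S x * Real.log (S x / P x)
          = S x * Real.log (g x) - S x * Real.log Z := by
        intro x _
        rcases eq_or_lt_of_le (hP x) with h | h
        · rw [hSP x h.symm]; ring
        · have e1 : S x / P x = g x / Z := by
            simp only [hSdef]; field_simp
          rw [e1, Real.log_div (hg0 x).ne' hZ.ne']; ring
      unfold klDivFin
      rw [Finset.sum_congr rfl key, Finset.sum_sub_distrib, ← Finset.sum_mul, hS1, one_mul]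
      simp only [hgdef]
      rw [sum_log_exp]
    refine ⟨c * klDivFin (fun y => ∑ x, S x * K x y) Q - klDivFin S P,
      ⟨S, hS0, hS1, hSP, rfl⟩, ?_⟩
    have hgibbs := gibbs (S := fun y => ∑ x, S x * K x y) (μ := Q) (g := f)
      hSY0 hSY1 (fun y => (hQ y).le) (fun y => (hf y).le)
      (fun y _ => mul_pos (hQ y) (hf y))
    beta_reduce at hgibbs
    have h5 := mul_le_mul_of_nonneg_left hgibbs hc.le
    rw [mul_sub] at h5
    linarith [hD, h5]
  have hBne : B.Nonempty := ⟨_, ⟨fun _ => 1, fun _ => one_pos, rfl⟩⟩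
  have hBbdd : BddAbove B := ⟨c * L, fun v hv => by
    obtain ⟨a, ha, hva⟩ := claimBA v hv; exact hva.trans (claimA a ha)⟩
  apply le_antisymm
  · refine csSup_le hAne fun a ha => ?_
    obtain ⟨S, hS0, hS1, hSP, rfl⟩ := ha
    obtain ⟨hSY0, hSY1, _⟩ := hpush S hS0 hS1
    refine le_of_forall_pos_le_add fun η hη => ?_
    set N : ℝ := (Fintype.card Y : ℝ) with hNdef
    have hN0 : 0 ≤ N := Nat.cast_nonneg _
    have hexp : 1 < Real.exp (η / c) := by
      rw [show (1:ℝ) = Real.exp 0 from (Real.exp_zero).symm]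
      exact Real.exp_lt_exp.mpr (by positivity)
    set ε : ℝ := (Real.exp (η / c) - 1) / (N + 1) with hεdef
    have hε : 0 < ε := div_pos (by linarith) (by linarith)
    have hεN : 1 + ε * N < Real.exp (η / c) := by
      have h7 : ε * (N + 1) = Real.exp (η / c) - 1 := div_mul_cancel₀ _ (by linarith)
      nlinarith [hε, hN0]
    set f : Y → ℝ := fun y => ((∑ x, S x * K x y) + ε) / Q y with hfdef
    have hf : ∀ y, 0 < f y := fun y => div_pos (by have := hSY0 y; linarith) (hQ y)
    have hQf : ∑ y, Q y * f y = 1 + ε * N := by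
      have key : ∀ y ∈ Finset.univ (α := Y), Q y * f y = (∑ x, S x * K x y) + ε := by
        intro y _
        simp only [hfdef]
        rw [mul_comm, div_mul_cancel₀ _ (hQ y).ne']
      rw [Finset.sum_congr rfl key, Finset.sum_add_distrib, hSY1, Finset.sum_const,
        nsmul_eq_mul, Finset.card_univ]
      rw [hNdef]; ring
    have hbB : Real.log (∑ x, P x * Real.exp (c * ∑ y, K x y * Real.log (f y)))
        - c * Real.log (∑ y, Q y * f y) ∈ B := ⟨f, hf, rfl⟩
    have hgibbsP := gibbs (S := S) (μ := P)
      (g := fun x => Real.exp (c * ∑ y, K x y * Real.log (f y))) hS0 hS1 hP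
      (fun x => (Real.exp_pos _).le)
      (fun x hx => mul_pos (lt_of_le_of_ne (hP x)
        (fun h => by rw [hSP x h.symm] at hx; exact lt_irrefl 0 hx)) (Real.exp_pos _))
    beta_reduce at hgibbsP
    rw [sum_log_exp] at hgibbsP
    have h3 : klDivFin (fun y => ∑ x, S x * K x y) Q
        ≤ ∑ y, (∑ x, S x * K x y) * Real.log (f y) := by
      unfold klDivFin
      beta_reduce
      apply Finset.sum_le_sum
      intro y _
      rcases eq_or_lt_of_le (hSY0 y) with h | h
      · rw [← h]; simp
      · have hlog : Real.log ((∑ x, S x * K x y) / Q y) ≤ Real.log (f y) := by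
          apply Real.log_le_log (div_pos h (hQ y))
          simp only [hfdef]
          exact (div_le_div_iff_of_pos_right (hQ y)).mpr (by linarith [hε.le])
        exact mul_le_mul_of_nonneg_left hlog (hSY0 y)
    have h4 : c * Real.log (1 + ε * N) < η := by
      have h5 : Real.log (1 + ε * N) < η / c := by
        have := Real.log_lt_log (by positivity) hεN
        rwa [Real.log_exp] at this
      calc c * Real.log (1 + ε * N) < c * (η / c) := mul_lt_mul_of_pos_left h5 hc
        _ = η := mul_div_cancel₀ _ hc.ne'
    have hble := le_csSup hBbdd hbB
    rw [hQf] at hble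
    have h6 := mul_le_mul_of_nonneg_left h3 hc.le
    linarith [hgibbsP, h6, h4, hble]
  · refine csSup_le hBne fun b hb => ?_
    obtain ⟨a, ha, hba⟩ := claimBA b hb
    exact hba.trans (le_csSup hAbdd ha)
end

section
/- Let φ : ℝ^d → ℝ be a function with bounded second derivatives (Hessian norm at most 2E') on a convex neighborhood, so that φ(S) ≥ φ(P) + ⟨∇φ(P), S − P⟩ − E'·‖S − P‖² for all S, P in that neighborhood. If (Δ_k) is a martingale difference sequence with P + Δ_1 + ⋯ + Δ_k in the neighborhood and ‖Δ_k‖ ≤ 2/(n−k), then Σ_{k=0}^{n-1} E[φ(P + Δ_1 + ⋯ + Δ_k)] ≥ n·φ(P) − 4E'(1 + ln(n−1)). -/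
/-!
Taking expectations in the second-order Taylor bound at `P` kills the linear term, because the
partial sums `S_k = Δ_1 + ⋯ + Δ_k` have mean zero, so `E φ(P + S_k) ≥ φ(P) − E'·E‖S_k‖²`.
Martingale increments are orthogonal in `L²`, hence `E‖S_k‖² = Σ_{i ≤ k} E‖Δ_i‖² ≤
Σ_{i ≤ k} 4/(n−i)²`. Summing over `k < n`, the term of index `i` is counted `n − i` times, which
leaves `4·H_{n−1} ≤ 4(1 + ln(n−1))`.
-/

open MeasureTheory Finset RealInnerProductSpace

section

variable {Ω E : Type*} {m m0 : MeasurableSpace Ω} {μ : Measure Ω}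

theorem integrable_norm_sq_of_ae_norm_le [NormedAddCommGroup E] [IsFiniteMeasure μ] {X : Ω → E}
    (hX : AEStronglyMeasurable X μ) {C : ℝ} (hC : ∀ᵐ ω ∂μ, ‖X ω‖ ≤ C) :
    Integrable (fun ω ↦ ‖X ω‖ ^ 2) μ :=
  Integrable.of_bound (hX.norm.pow 2) (C ^ 2) <| by
    filter_upwards [hC] with ω hω
    simpa using pow_le_pow_left₀ (norm_nonneg _) hω 2

theorem ae_norm_sum_le_sum [NormedAddCommGroup E] {ι : Type*} {s : Finset ι} {Y : ι → Ω → E}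
    {c : ι → ℝ} (h : ∀ i ∈ s, ∀ᵐ ω ∂μ, ‖Y i ω‖ ≤ c i) :
    ∀ᵐ ω ∂μ, ‖∑ i ∈ s, Y i ω‖ ≤ ∑ i ∈ s, c i := by
  filter_upwards [(Filter.eventually_all_finset s).2 h] with ω hω
  exact (norm_sum_le _ _).trans (sum_le_sum hω)

theorem integral_eq_zero_of_condExp_eq_zero [NormedAddCommGroup E] [NormedSpace ℝ E]
    [CompleteSpace E] (hm : m ≤ m0) [SigmaFinite (μ.trim hm)] {Y : Ω → E}
    (hY : μ[Y | m] =ᵐ[μ] 0) : ∫ ω, Y ω ∂μ = 0 := by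
  rw [← integral_condExp hm, integral_congr_ae hY, Pi.zero_def, integral_zero]

variable [NormedAddCommGroup E] [InnerProductSpace ℝ E] [CompleteSpace E]

theorem integral_inner_eq_zero_of_condExp_eq_zero (hm : m ≤ m0) [SigmaFinite (μ.trim hm)]
    {X Y : Ω → E} (hX : StronglyMeasurable[m] X) (hXY : Integrable (fun ω ↦ ⟪X ω, Y ω⟫) μ)
    (hY : Integrable Y μ) (hYm : μ[Y | m] =ᵐ[μ] 0) :
    ∫ ω, ⟪X ω, Y ω⟫ ∂μ = 0 := by
  refine integral_eq_zero_of_condExp_eq_zero hm ?_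
  filter_upwards [condExp_bilin_of_stronglyMeasurable_left (innerSL ℝ) hX hXY hY, hYm]
    with ω hω hωY
  exact hω.trans (by simp [hωY])

theorem integral_norm_add_sq_of_condExp_eq_zero [IsFiniteMeasure μ] (hm : m ≤ m0)
    {X Y : Ω → E} (hX : StronglyMeasurable[m] X) {C D : ℝ} (hXC : ∀ᵐ ω ∂μ, ‖X ω‖ ≤ C)
    (hY : Integrable Y μ) (hYD : ∀ᵐ ω ∂μ, ‖Y ω‖ ≤ D) (hYm : μ[Y | m] =ᵐ[μ] 0) :
    ∫ ω, ‖X ω + Y ω‖ ^ 2 ∂μ = ∫ ω, ‖X ω‖ ^ 2 ∂μ + ∫ ω, ‖Y ω‖ ^ 2 ∂μ := by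
  have hXae : AEStronglyMeasurable X μ := (hX.mono hm).aestronglyMeasurable
  have hX2 := integrable_norm_sq_of_ae_norm_le hXae hXC
  have hY2 := integrable_norm_sq_of_ae_norm_le hY.1 hYD
  have hXY : Integrable (fun ω ↦ ⟪X ω, Y ω⟫) μ := by
    refine (hY.norm.const_mul C).mono' (hXae.inner hY.1) ?_
    filter_upwards [hXC] with ω hω
    exact (norm_inner_le_norm _ _).trans (mul_le_mul_of_nonneg_right hω (norm_nonneg _))
  have hcross := integral_inner_eq_zero_of_condExp_eq_zero hm hX hXY hY hYm
  simp_rw [norm_add_sq_real]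
  have hsum : Integrable (fun ω ↦ ‖X ω‖ ^ 2 + 2 * ⟪X ω, Y ω⟫) μ := hX2.add (hXY.const_mul 2)
  rw [integral_add hsum hY2, integral_add hX2 (hXY.const_mul 2),
    integral_const_mul, hcross, mul_zero, add_zero]

theorem sub_mul_integral_norm_sq_le_integral_of_ae_le [IsProbabilityMeasure μ] {X : Ω → E}
    {f : Ω → ℝ} {a b : ℝ} {g : E} (hf : ∀ᵐ ω ∂μ, a + ⟪g, X ω⟫ - b * ‖X ω‖ ^ 2 ≤ f ω)
    (hX : Integrable X μ) (hX0 : ∫ ω, X ω ∂μ = 0) (hX2 : Integrable (fun ω ↦ ‖X ω‖ ^ 2) μ)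
    (hfi : Integrable f μ) :
    a - b * ∫ ω, ‖X ω‖ ^ 2 ∂μ ≤ ∫ ω, f ω ∂μ := by
  have hlin : Integrable (fun ω ↦ a + ⟪g, X ω⟫) μ := (integrable_const a).add (hX.const_inner g)
  calc a - b * ∫ ω, ‖X ω‖ ^ 2 ∂μ = ∫ ω, (a + ⟪g, X ω⟫ - b * ‖X ω‖ ^ 2) ∂μ := by
        rw [integral_sub hlin (hX2.const_mul b), integral_add (integrable_const a)
          (hX.const_inner g), integral_const_mul, integral_inner hX, hX0]
        simp
    _ ≤ ∫ ω, f ω ∂μ := integral_mono_ae (hlin.sub (hX2.const_mul b)) hfi hf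

section Martingale

variable {ℱ : Filtration ℕ m0} {Δ : ℕ → Ω → E}

theorem integral_sum_Icc_eq_zero [IsFiniteMeasure μ] (hint : ∀ k, Integrable (Δ k) μ)
    (hmds : ∀ k, μ[Δ (k + 1) | ℱ k] =ᵐ[μ] 0) (k : ℕ) :
    ∫ ω, ∑ i ∈ Icc 1 k, Δ i ω ∂μ = 0 := by
  rw [integral_finsetSum _ fun i _ ↦ hint i]
  refine sum_eq_zero fun i hi ↦ ?_
  obtain ⟨j, rfl⟩ : ∃ j, i = j + 1 := ⟨i - 1, by grind⟩
  exact integral_eq_zero_of_condExp_eq_zero (ℱ.le j) (hmds j)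

theorem integral_norm_sum_Icc_sq_le [IsProbabilityMeasure μ]
    (hadapt : ∀ k, StronglyMeasurable[ℱ k] (Δ k)) (hint : ∀ k, Integrable (Δ k) μ)
    (hmds : ∀ k, μ[Δ (k + 1) | ℱ k] =ᵐ[μ] 0) {c : ℕ → ℝ} {k : ℕ}
    (hbdd : ∀ i ∈ Icc 1 k, ∀ᵐ ω ∂μ, ‖Δ i ω‖ ≤ c i) :
    ∫ ω, ‖∑ i ∈ Icc 1 k, Δ i ω‖ ^ 2 ∂μ ≤ ∑ i ∈ Icc 1 k, c i ^ 2 := by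
  induction k with
  | zero => simp
  | succ k ih =>
    have hbdd' : ∀ i ∈ Icc 1 k, ∀ᵐ ω ∂μ, ‖Δ i ω‖ ≤ c i := fun i hi ↦
      hbdd i (Icc_subset_Icc_right k.le_succ hi)
    have hlast : ∀ᵐ ω ∂μ, ‖Δ (k + 1) ω‖ ≤ c (k + 1) := hbdd _ (right_mem_Icc.2 (by omega))
    have hS : StronglyMeasurable[ℱ k] fun ω ↦ ∑ i ∈ Icc 1 k, Δ i ω :=
      stronglyMeasurable_fun_sum _ fun i hi ↦ (hadapt i).mono (ℱ.mono (mem_Icc.1 hi).2)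
    simp_rw [sum_Icc_succ_top (by omega : 1 ≤ k + 1)]
    rw [integral_norm_add_sq_of_condExp_eq_zero (ℱ.le k) hS (ae_norm_sum_le_sum hbdd')
      (hint _) hlast (hmds k)]
    gcongr
    · exact ih hbdd'
    · calc ∫ ω, ‖Δ (k + 1) ω‖ ^ 2 ∂μ ≤ ∫ _, c (k + 1) ^ 2 ∂μ := by
            refine integral_mono_ae (integrable_norm_sq_of_ae_norm_le (hint _).1 hlast)
              (integrable_const _) ?_
            filter_upwards [hlast] with ω hω
            exact pow_le_pow_left₀ (norm_nonneg _) hω 2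
        _ = c (k + 1) ^ 2 := by simp

end Martingale

end

theorem sum_range_sum_Icc_eq_sum_Icc_mul (f : ℕ → ℝ) (n : ℕ) :
    ∑ k ∈ range n, ∑ i ∈ Icc 1 k, f i = ∑ i ∈ Icc 1 n, ((n : ℝ) - i) * f i := by
  induction n with
  | zero => simp
  | succ n ih =>
    rw [sum_range_succ, ih, sum_Icc_succ_top (by omega), ← sum_add_distrib]
    push_cast
    simp only [sub_self, zero_mul, add_zero]
    exact sum_congr rfl fun i _ ↦ by ring

-- The term `i = n` is `0⁻¹ = 0`; the others reflect onto `H_{n-1}`.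
theorem sum_Icc_inv_sub_le_one_add_log (n : ℕ) :
    ∑ i ∈ Icc 1 n, ((n : ℝ) - i)⁻¹ ≤ 1 + Real.log ((n : ℝ) - 1) := by
  rcases n with _ | n
  · simp
  have h := harmonic_le_one_add_log n
  rw [harmonic_eq_sum_Icc] at h
  push_cast at h
  rw [Nat.cast_succ, add_sub_cancel_right, sum_Icc_succ_top (by omega), Nat.cast_succ, sub_self,
    inv_zero, add_zero]
  convert h using 1
  refine sum_nbij' (n + 1 - ·) (n + 1 - ·) ?_ ?_ ?_ ?_ fun i hi ↦ ?_
  iterate 4 · intro i hi; simp only [mem_Icc] at hi ⊢; omega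
  rw [mem_Icc] at hi
  rw [Nat.cast_sub (by omega)]
  push_cast
  ring_nf

theorem sum_range_sum_Icc_sq_two_div_sub_le (n : ℕ) :
    ∑ k ∈ range n, ∑ i ∈ Icc 1 k, (2 / ((n : ℝ) - i)) ^ 2 ≤ 4 * (1 + Real.log ((n : ℝ) - 1)) := by
  have hterm : ∀ i : ℕ, ((n : ℝ) - i) * (2 / ((n : ℝ) - i)) ^ 2 = 4 * ((n : ℝ) - i)⁻¹ := by
    intro i
    rcases eq_or_ne ((n : ℝ) - i) 0 with h | h
    · simp [h]
    · field_simp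
      ring
  rw [sum_range_sum_Icc_eq_sum_Icc_mul, sum_congr rfl fun i _ ↦ hterm i, ← mul_sum]
  gcongr
  exact sum_Icc_inv_sub_le_one_add_log n

theorem taylor_martingale_lower_bound_general {Ω : Type*} {m0 : MeasurableSpace Ω}
    (μ : Measure Ω) [IsProbabilityMeasure μ] {d : ℕ} (n : ℕ)
    (N : Set (EuclideanSpace ℝ (Fin d)))
    (φ : EuclideanSpace ℝ (Fin d) → ℝ) (gradφ : EuclideanSpace ℝ (Fin d) → EuclideanSpace ℝ (Fin d))
    (E' : ℝ) (hE' : 0 < E')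
    (hTaylor : ∀ S ∈ N, ∀ P ∈ N,
      φ P + ⟪gradφ P, S - P⟫ - E' * ‖S - P‖ ^ 2 ≤ φ S)
    (ℱ : Filtration ℕ m0) (Δ : ℕ → Ω → EuclideanSpace ℝ (Fin d))
    (hadapt : ∀ k, StronglyMeasurable[ℱ k] (Δ k))
    (hint : ∀ k, Integrable (Δ k) μ)
    (hmds : ∀ k, μ[Δ (k + 1) | ℱ k] =ᵐ[μ] 0)
    (P : EuclideanSpace ℝ (Fin d)) (hP : P ∈ N)
    (hmem : ∀ k ∈ Finset.range n, ∀ᵐ ω ∂μ, P + ∑ i ∈ Finset.Icc 1 k, Δ i ω ∈ N)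
    (hbdd : ∀ k ∈ Finset.Icc 1 (n - 1), ∀ᵐ ω ∂μ, ‖Δ k ω‖ ≤ 2 / ((n : ℝ) - k))
    (hφint : ∀ k ∈ Finset.range n,
      Integrable (fun ω => φ (P + ∑ i ∈ Finset.Icc 1 k, Δ i ω)) μ) :
    (n : ℝ) * φ P - 4 * E' * (1 + Real.log ((n : ℝ) - 1)) ≤
      ∑ k ∈ Finset.range n, ∫ ω, φ (P + ∑ i ∈ Finset.Icc 1 k, Δ i ω) ∂μ := by
  have hbdd' : ∀ k ∈ range n, ∀ i ∈ Icc 1 k, ∀ᵐ ω ∂μ, ‖Δ i ω‖ ≤ 2 / ((n : ℝ) - i) :=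
    fun k hk i hi ↦ hbdd i (Icc_subset_Icc_right (by grind) hi)
  have hS : ∀ k ∈ range n, φ P - E' * ∫ ω, ‖∑ i ∈ Icc 1 k, Δ i ω‖ ^ 2 ∂μ ≤
      ∫ ω, φ (P + ∑ i ∈ Icc 1 k, Δ i ω) ∂μ := by
    intro k hk
    have hX : Integrable (fun ω ↦ ∑ i ∈ Icc 1 k, Δ i ω) μ := integrable_finsetSum _ fun i _ ↦ hint i
    refine sub_mul_integral_norm_sq_le_integral_of_ae_le (g := gradφ P) ?_ hX
      (integral_sum_Icc_eq_zero hint hmds k)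
      (integrable_norm_sq_of_ae_norm_le hX.1 (ae_norm_sum_le_sum (hbdd' k hk))) (hφint k hk)
    filter_upwards [hmem k hk] with ω hω
    simpa using hTaylor _ hω P hP
  calc (n : ℝ) * φ P - 4 * E' * (1 + Real.log ((n : ℝ) - 1))
      ≤ (n : ℝ) * φ P - E' * ∑ k ∈ range n, ∑ i ∈ Icc 1 k, (2 / ((n : ℝ) - i)) ^ 2 := by
        rw [mul_comm 4 E', mul_assoc]
        gcongr
        exact sum_range_sum_Icc_sq_two_div_sub_le n
    _ ≤ ∑ k ∈ range n, (φ P - E' * ∫ ω, ‖∑ i ∈ Icc 1 k, Δ i ω‖ ^ 2 ∂μ) := by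
        rw [sum_sub_distrib, sum_const, card_range, nsmul_eq_mul, ← mul_sum]
        gcongr with k hk
        exact integral_norm_sum_Icc_sq_le hadapt hint hmds (hbdd' k hk)
    _ ≤ _ := sum_le_sum hS

/-- Key computation in the single-letterization lemma: a second-order Taylor lower bound
on `φ` combined with a martingale difference sequence `(Δ_k)` with `‖Δ_k‖ ≤ 2/(n-k)`
gives `Σ_{k=0}^{n-1} E[φ(P + Δ_1 + ⋯ + Δ_k)] ≥ n·φ(P) − 4E'(1 + ln(n−1))`. -/
theorem taylor_martingale_lower_bound {Ω : Type*} {m0 : MeasurableSpace Ω}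
    (μ : Measure Ω) [IsProbabilityMeasure μ] {d : ℕ} (n : ℕ) (hn : 2 ≤ n)
    (N : Set (EuclideanSpace ℝ (Fin d))) (hN : Convex ℝ N)
    (φ : EuclideanSpace ℝ (Fin d) → ℝ) (gradφ : EuclideanSpace ℝ (Fin d) → EuclideanSpace ℝ (Fin d))
    (E' : ℝ) (hE' : 0 < E')
    (hTaylor : ∀ S ∈ N, ∀ P ∈ N,
      φ P + ⟪gradφ P, S - P⟫ - E' * ‖S - P‖ ^ 2 ≤ φ S)
    (ℱ : Filtration ℕ m0) (Δ : ℕ → Ω → EuclideanSpace ℝ (Fin d))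
    (hadapt : ∀ k, StronglyMeasurable[ℱ k] (Δ k))
    (hint : ∀ k, Integrable (Δ k) μ)
    (hmds : ∀ k, μ[Δ (k + 1) | ℱ k] =ᵐ[μ] 0)
    (hmean : ∫ ω, Δ 1 ω ∂μ = 0)
    (P : EuclideanSpace ℝ (Fin d)) (hP : P ∈ N)
    (hmem : ∀ k ∈ Finset.range n, ∀ᵐ ω ∂μ, P + ∑ i ∈ Finset.Icc 1 k, Δ i ω ∈ N)
    (hbdd : ∀ k ∈ Finset.Icc 1 (n - 1), ∀ᵐ ω ∂μ, ‖Δ k ω‖ ≤ 2 / ((n : ℝ) - k))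
    (hφint : ∀ k ∈ Finset.range n,
      Integrable (fun ω => φ (P + ∑ i ∈ Finset.Icc 1 k, Δ i ω)) μ) :
    (n : ℝ) * φ P - 4 * E' * (1 + Real.log ((n : ℝ) - 1)) ≤
      ∑ k ∈ Finset.range n, ∫ ω, φ (P + ∑ i ∈ Finset.Icc 1 k, Δ i ω) ∂μ :=
  taylor_martingale_lower_bound_general μ n N φ gradφ E' hE' hTaylor ℱ Δ hadapt hint hmds P hP hmem
    hbdd hφint
end

section
/- Let Q_{XY} be a fully supported probability distribution on a finite product X × Y, c ≥ 1, and let P_{U|X} be a minimizer of c·H(Y|U) + I(U;X) over stochastic kernels from X to a finite set U, where (U,X,Y) ∼ P_{U|X}·Q_{XY} and U − X − Y form a Markov chain. Then the conditional expectation E[c·ln(1/Q_{Y|U}(Y|U)) + ln(Q_{X|U}(X|U)/Q_X(X)) | U, X] does not depend on U (almost surely): it is a function of X alone. -/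
open Finset

variable {X Y U : Type*} [Fintype X] [Fintype Y] [Fintype U]

/-- Marginal `Q_X` of a joint distribution `Q` on `X × Y`. -/
noncomputable def margX (Q : X → Y → ℝ) (x : X) : ℝ := ∑ y, Q x y

/-- Marginal `P_U` of `U` under the joint law `P_{U|X} · Q_{XY}`. -/
noncomputable def margU (Q : X → Y → ℝ) (P : X → U → ℝ) (u : U) : ℝ :=
  ∑ x, margX Q x * P x u

/-- Conditional law `Q_{Y|U}(y|u)` under the joint law `P_{U|X} · Q_{XY}` (Markov chain
`U - X - Y`). -/
noncomputable def condYU (Q : X → Y → ℝ) (P : X → U → ℝ) (u : U) (y : Y) : ℝ :=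
  (∑ x, Q x y * P x u) / margU Q P u

/-- Conditional law `Q_{X|U}(x|u)` under the joint law `P_{U|X} · Q_{XY}`. -/
noncomputable def condXU (Q : X → Y → ℝ) (P : X → U → ℝ) (u : U) (x : X) : ℝ :=
  margX Q x * P x u / margU Q P u

/-- Conditional Shannon entropy `H(Y|U)` (natural log) under `P_{U|X} · Q_{XY}`. -/
noncomputable def condEntYU (Q : X → Y → ℝ) (P : X → U → ℝ) : ℝ :=
  -∑ u, ∑ y, (∑ x, Q x y * P x u) * Real.log (condYU Q P u y)

/-- Mutual information `I(U;X)` (natural log) under `P_{U|X} · Q_X`. -/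
noncomputable def mutInfUX (Q : X → Y → ℝ) (P : X → U → ℝ) : ℝ :=
  ∑ u, ∑ x, margX Q x * P x u * Real.log (P x u / margU Q P u)

/-- The WAK objective `c·H(Y|U) + I(U;X)`. -/
noncomputable def wakObj (c : ℝ) (Q : X → Y → ℝ) (P : X → U → ℝ) : ℝ :=
  c * condEntYU Q P + mutInfUX Q P

/-!
At a minimizer `P`, move mass `ε` from `u'` to `u` in the row `x` of `P`. Since `P x u` and
`P x u'` are positive, this keeps `P` a stochastic kernel for small `|ε|`, so the derivative of
the objective along this line vanishes at `ε = 0`. Along any direction `D` the first variation of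
`c·H(Y|U) + I(U;X)` is `∑ₓ,ᵤ D x u · Q_X(x) · E[c·ı_{Y|U} + ı_{U;X} | X = x, U = u]`: the terms
coming from the variation of the normalisation `P_U(u)` cancel because the variation of a
marginal is the marginal of the variation. For the chosen direction this is
`Q_X(x) · (E[· | x, u] - E[· | x, u'])`.
-/

theorem hasDerivAt_mul_log_div {a b m k : ℝ} (hb : a = 0 → b = 0) (hm : m = 0 → a = 0) :
    HasDerivAt (fun ε => (a + ε * b) * Real.log ((a + ε * b) / (m + ε * k)))
      (b * Real.log (a / m) + b - a * k / m) 0 := by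
  rcases eq_or_ne a 0 with rfl | ha
  · simpa [hb rfl] using hasDerivAt_const (0 : ℝ) (0 : ℝ)
  have hm : m ≠ 0 := mt hm ha
  have hlin : ∀ c d : ℝ, HasDerivAt (fun ε => c + ε * d) d 0 := fun c d => by
    simpa using ((hasDerivAt_id (0 : ℝ)).mul_const d).const_add c
  have h := (hlin a b).fun_mul (((hlin a b).fun_div (hlin m k) (by simpa)).log (by simp [ha, hm]))
  refine h.congr_deriv ?_
  simp only [zero_mul, add_zero]
  field_simp
  ring

theorem sum_mul_eq_zero_iff_of_pos {ι : Type*} [Fintype ι] {f g : ι → ℝ} (hf : ∀ i, 0 < f i)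
    (hg : ∀ i, 0 ≤ g i) : ∑ i, f i * g i = 0 ↔ ∀ i, g i = 0 := by
  rw [sum_eq_zero_iff_of_nonneg fun i _ => mul_nonneg (hf i).le (hg i)]
  simp [(hf _).ne']

theorem sub_mul_div_self_eq_zero {m k : ℝ} (h : m = 0 → k = 0) : k - m * k / m = 0 := by
  rcases eq_or_ne m 0 with hm | hm
  · simp [h hm]
  · rw [mul_div_cancel_left₀ k hm, sub_self]

theorem sum_mul_add_mul {ι : Type*} [Fintype ι] (f g h : ι → ℝ) (ε : ℝ) :
    ∑ i, f i * (g i + ε * h i) = ∑ i, f i * g i + ε * ∑ i, f i * h i := by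
  rw [mul_sum, ← sum_add_distrib]
  exact sum_congr rfl fun i _ => by ring

theorem sum_sum_single_sub_single_mul {ι κ : Type*} [Fintype ι] [Fintype κ] [DecidableEq ι]
    [DecidableEq κ] (i : ι) (k k' : κ) (G : ι → κ → ℝ) :
    ∑ a, ∑ b, (Pi.single i (Pi.single k 1 - Pi.single k' 1) : ι → κ → ℝ) a b * G a b =
      G i k - G i k' := by
  simp [Pi.single_apply, ite_apply, sub_mul, sum_sub_distrib]

theorem margX_pos {α β : Type*} [Fintype β] [Nonempty β] {Q : α → β → ℝ}
    (hQ : ∀ a b, 0 < Q a b) (a : α) : 0 < margX Q a :=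
  sum_pos (fun b _ => hQ a b) univ_nonempty

theorem sum_sum_mul_eq_margU {V : Type*} (Q : X → Y → ℝ) (P : X → V → ℝ) (v : V) :
    ∑ y, ∑ x, Q x y * P x v = margU Q P v := by
  rw [sum_comm]
  simp only [margU, margX, sum_mul]

theorem margU_add_smul {V : Type*} (Q : X → Y → ℝ) (P D : X → V → ℝ) (ε : ℝ) (v : V) :
    margU Q (P + ε • D) v = margU Q P v + ε * margU Q D v := by
  simp only [margU, Pi.add_apply, Pi.smul_apply, smul_eq_mul, sum_mul_add_mul]

/-- `E[c·ı_{Y|U}(Y|U) + ı_{U;X}(U;X) | X = x, U = u]`: by the Markov chain `U - X - Y`, the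
conditional law of `Y` given `X = x, U = u` is `Q x · / Q_X(x)`. -/
noncomputable def wakCondExp (c : ℝ) (Q : X → Y → ℝ) (P : X → U → ℝ) (x : X) (u : U) : ℝ :=
  ∑ y, (Q x y / margX Q x) *
    (c * Real.log (1 / condYU Q P u y) + Real.log (condXU Q P u x / margX Q x))

theorem margX_mul_wakCondExp {V : Type*} (c : ℝ) (Q : X → Y → ℝ) (P : X → V → ℝ) {x : X}
    (hx : margX Q x ≠ 0) (u : V) :
    margX Q x * wakCondExp c Q P x u = c * ∑ y, Q x y * Real.log (1 / condYU Q P u y) +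
      margX Q x * Real.log (P x u / margU Q P u) := by
  have hXU : condXU Q P u x / margX Q x = P x u / margU Q P u := by
    rw [condXU, mul_div_assoc, mul_div_cancel_left₀ _ hx]
  simp only [wakCondExp, hXU, mul_sum, ← mul_assoc, mul_div_cancel₀ _ hx, mul_add,
    sum_add_distrib, ← sum_mul]
  rw [margX]
  exact congrArg (· + _) (sum_congr rfl fun y _ => by ring)

section FirstVariation

variable [Nonempty Y] {Q : X → Y → ℝ} {P : X → U → ℝ} (D : X → U → ℝ)

theorem hasDerivAt_condEntYU_add_smul (hQ : ∀ x y, 0 < Q x y) (hP : ∀ x u, 0 ≤ P x u)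
    (hD : ∀ x u, P x u = 0 → D x u = 0) :
    HasDerivAt (fun ε : ℝ => condEntYU Q (P + ε • D))
      (∑ x, ∑ u, D x u * ∑ y, Q x y * Real.log (1 / condYU Q P u y)) 0 := by
  have hA (u y) (h : ∑ x, Q x y * P x u = 0) (x) : P x u = 0 :=
    (sum_mul_eq_zero_iff_of_pos (hQ · y) (hP · u)).1 h x
  have hM (u) (h : margU Q P u = 0) (x) : P x u = 0 :=
    (sum_mul_eq_zero_iff_of_pos (margX_pos hQ) (hP · u)).1 h x
  simp only [condEntYU, condYU, margU_add_smul, Pi.add_apply, Pi.smul_apply, smul_eq_mul,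
    sum_mul_add_mul]
  refine (HasDerivAt.fun_sum fun u _ => HasDerivAt.fun_sum fun y _ =>
    hasDerivAt_mul_log_div (fun h => ?_) (fun h => ?_)).neg.congr_deriv ?_
  · simp [hD _ _ (hA u y h _)]
  · simp [hM u h]
  · have hcancel (u : U) : ∑ y, (∑ x, Q x y * D x u -
        (∑ x, Q x y * P x u) * margU Q D u / margU Q P u) = 0 := by
      rw [sum_sub_distrib, ← sum_div, ← sum_mul, sum_sum_mul_eq_margU, sum_sum_mul_eq_margU]
      exact sub_mul_div_self_eq_zero fun h => by simp [margU, hD _ _ (hM u h _)]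
    simp only [add_sub_assoc, sum_add_distrib, hcancel, add_zero]
    simp only [one_div, Real.log_inv, mul_neg, sum_neg_distrib, mul_sum, sum_mul]
    conv_rhs => rw [sum_comm]
    refine congrArg _ (sum_congr rfl fun u _ => ?_)
    rw [sum_comm]
    exact sum_congr rfl fun y _ => sum_congr rfl fun x _ => by ring

theorem hasDerivAt_mutInfUX_add_smul (hQ : ∀ x y, 0 < Q x y) (hP : ∀ x u, 0 ≤ P x u)
    (hD : ∀ x u, P x u = 0 → D x u = 0) :
    HasDerivAt (fun ε : ℝ => mutInfUX Q (P + ε • D))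
      (∑ x, ∑ u, D x u * (margX Q x * Real.log (P x u / margU Q P u))) 0 := by
  have hM (u) (h : margU Q P u = 0) (x) : P x u = 0 :=
    (sum_mul_eq_zero_iff_of_pos (margX_pos hQ) (hP · u)).1 h x
  simp only [mutInfUX, margU_add_smul, Pi.add_apply, Pi.smul_apply, smul_eq_mul, mul_assoc]
  refine (HasDerivAt.fun_sum fun u _ => HasDerivAt.fun_sum fun x _ =>
    (hasDerivAt_mul_log_div (hD x u) fun h => hM u h x).const_mul _).congr_deriv ?_
  have hcancel (u : U) :
      ∑ x, margX Q x * (D x u - P x u * margU Q D u / margU Q P u) = 0 := by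
    simp only [mul_sub, sum_sub_distrib, ← mul_div_assoc, ← mul_assoc, ← sum_div, ← sum_mul]
    exact sub_mul_div_self_eq_zero fun h => by simp [hD _ _ (hM u h _)]
  simp only [add_sub_assoc, mul_add, sum_add_distrib, hcancel, add_zero]
  rw [sum_comm]
  exact sum_congr rfl fun x _ => sum_congr rfl fun u _ => by ring

theorem hasDerivAt_wakObj_add_smul (c : ℝ) (hQ : ∀ x y, 0 < Q x y) (hP : ∀ x u, 0 ≤ P x u)
    (hD : ∀ x u, P x u = 0 → D x u = 0) :
    HasDerivAt (fun ε : ℝ => wakObj c Q (P + ε • D))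
      (∑ x, ∑ u, D x u * (margX Q x * wakCondExp c Q P x u)) 0 := by
  refine (((hasDerivAt_condEntYU_add_smul D hQ hP hD).const_mul c).add
    (hasDerivAt_mutInfUX_add_smul D hQ hP hD)).congr_deriv ?_
  simp only [margX_mul_wakCondExp c Q P (margX_pos hQ _).ne', mul_add, sum_add_distrib, mul_sum]
  exact congrArg (· + _) (sum_congr rfl fun x _ => sum_congr rfl fun u _ =>
    sum_congr rfl fun y _ => by ring)

theorem sum_mul_wakCondExp_eq_zero_of_isMin (c : ℝ) (hQ : ∀ x y, 0 < Q x y)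
    (hP : ∀ x u, 0 ≤ P x u) (hP1 : ∀ x, ∑ u, P x u = 1)
    (hmin : ∀ P' : X → U → ℝ, (∀ x u, 0 ≤ P' x u) → (∀ x, ∑ u, P' x u = 1) →
      wakObj c Q P ≤ wakObj c Q P')
    (hD : ∀ x u, P x u = 0 → D x u = 0) (hD0 : ∀ x, ∑ u, D x u = 0) :
    ∑ x, ∑ u, D x u * (margX Q x * wakCondExp c Q P x u) = 0 := by
  refine IsLocalMin.hasDerivAt_eq_zero ?_ (hasDerivAt_wakObj_add_smul D c hQ hP hD)
  have hnonneg : ∀ᶠ ε in nhds (0 : ℝ), ∀ x u, 0 ≤ (P + ε • D) x u := by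
    simp only [Filter.eventually_all]
    intro x u
    rcases (hP x u).eq_or_lt with h | h
    · simp [← h, hD x u h.symm]
    · have hcont : Continuous fun ε : ℝ => P x u + ε * D x u := by fun_prop
      filter_upwards [(hcont.tendsto' 0 _ (by simp)).eventually_const_lt h] with ε hε
      simpa using hε.le
  filter_upwards [hnonneg] with ε hε
  simpa using hmin _ hε fun x => by simp [sum_add_distrib, ← mul_sum, hP1, hD0]

end FirstVariation

theorem wak_stationarity_cond_exp_indep_of_u_general
    (Q : X → Y → ℝ) (P : X → U → ℝ) (c : ℝ)
    (hQpos : ∀ x y, 0 < Q x y)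
    (hPnn : ∀ x u, 0 ≤ P x u) (hP1 : ∀ x, ∑ u, P x u = 1)
    (hmin : ∀ P' : X → U → ℝ, (∀ x u, 0 ≤ P' x u) → (∀ x, ∑ u, P' x u = 1) →
      wakObj c Q P ≤ wakObj c Q P') :
    ∀ (x : X) (u u' : U), 0 < P x u → 0 < P x u' →
      ∑ y, (Q x y / margX Q x) *
          (c * Real.log (1 / condYU Q P u y) + Real.log (condXU Q P u x / margX Q x)) =
      ∑ y, (Q x y / margX Q x) *
          (c * Real.log (1 / condYU Q P u' y) + Real.log (condXU Q P u' x / margX Q x)) := by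
  intro x₀ u u' hu hu'
  rcases isEmpty_or_nonempty Y with _ | _
  · simp
  classical
  let D : X → U → ℝ := Pi.single x₀ (Pi.single u 1 - Pi.single u' 1)
  have hD (x v) (h : P x v = 0) : D x v = 0 := by
    rcases eq_or_ne x x₀ with rfl | hx
    · have hvu : v ≠ u := by rintro rfl; linarith
      have hvu' : v ≠ u' := by rintro rfl; linarith
      simp [D, hvu, hvu']
    · simp [D, hx]
  have hD0 (x) : ∑ v, D x v = 0 := by
    simp [D, Pi.single_apply, ite_apply, sum_sub_distrib]
  have hstat := sum_mul_wakCondExp_eq_zero_of_isMin D c hQpos hPnn hP1 hmin hD hD0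
  rw [sum_sum_single_sub_single_mul] at hstat
  exact mul_left_cancel₀ (margX_pos hQpos x₀).ne' (sub_eq_zero.1 hstat)

/-- Proposition 1: at a minimizer of `c·H(Y|U) + I(U;X)`, the conditional expectation
`E[c·ı_{Y|U}(Y|U) + ı_{U;X}(U;X) | U, X]` does not depend on `U`. -/
theorem wak_stationarity_cond_exp_indep_of_u
    (Q : X → Y → ℝ) (P : X → U → ℝ) (c : ℝ) (hc : 1 ≤ c)
    (hQpos : ∀ x y, 0 < Q x y) (hQ1 : ∑ x, ∑ y, Q x y = 1)
    (hPnn : ∀ x u, 0 ≤ P x u) (hP1 : ∀ x, ∑ u, P x u = 1)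
    (hmin : ∀ P' : X → U → ℝ, (∀ x u, 0 ≤ P' x u) → (∀ x, ∑ u, P' x u = 1) →
      wakObj c Q P ≤ wakObj c Q P') :
    ∀ (x : X) (u u' : U), 0 < P x u → 0 < P x u' →
      ∑ y, (Q x y / margX Q x) *
          (c * Real.log (1 / condYU Q P u y) + Real.log (condXU Q P u x / margX Q x)) =
      ∑ y, (Q x y / margX Q x) *
          (c * Real.log (1 / condYU Q P u' y) + Real.log (condXU Q P u' x / margX Q x)) :=
  wak_stationarity_cond_exp_indep_of_u_general Q P c hQpos hPnn hP1 hmin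
end

section
/- Let φ : {1,…,n} → Y satisfy |φ^{-1}(y)| = n·P_Y(y) for each y ∈ Y, where P_Y is an n-type. If S^n is uniform on the permutations of (1,…,n), then φ^n(S^n) = (φ(S_1),…,φ(S_n)) is uniformly distributed on the type class T_n(P_Y). -/
open Finset

/-- Permutations intertwining `φ` and `y` correspond to families of fiber bijections. -/
def permFiberEquiv {α : Type*} {𝒴 : Type*} [DecidableEq 𝒴] (φ y : α → 𝒴) :
    {σ : Equiv.Perm α // φ ∘ σ = y} ≃ ∀ c : 𝒴, ({i // y i = c} ≃ {i // φ i = c}) where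
  toFun σ c :=
    { toFun := fun i => ⟨σ.1 i.1, by
        have := congrFun σ.2 i.1; simp only [Function.comp] at this
        rw [this, i.2]⟩
      invFun := fun j => ⟨σ.1.symm j.1, by
        have := congrFun σ.2 (σ.1.symm j.1)
        simp only [Function.comp, Equiv.apply_symm_apply] at this
        rw [← this, j.2]⟩
      left_inv := fun i => by simp
      right_inv := fun j => by simp }
  invFun F :=
    ⟨((Equiv.sigmaFiberEquiv y).symm.trans ((Equiv.sigmaCongrRight F).trans
        (Equiv.sigmaFiberEquiv φ))), by
      funext i
      simp only [Equiv.trans_apply, Equiv.sigmaCongrRight, Equiv.sigmaFiberEquiv,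
        Equiv.coe_fn_symm_mk, Equiv.coe_fn_mk]
      exact (F (y i) ⟨i, rfl⟩).2⟩
  left_inv σ := by
    ext i
    simp [Equiv.sigmaFiberEquiv, Equiv.sigmaCongrRight]
  right_inv F := by
    funext c
    ext i
    obtain ⟨i, hi⟩ := i
    subst hi
    simp [Equiv.sigmaFiberEquiv, Equiv.sigmaCongrRight]

/-- If `φ : {1,…,n} → Y` has fibers of sizes `m c = n·P_Y(c)`, then the coordinatewise
extension `φ^n` maps the uniform distribution on permutations of `(1,…,n)` to the
uniform distribution on the type class `T_n(P_Y)`: every `σ` lands in the type class,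
and every point of the type class has the same number (namely `Π_c (m c)!`) of
preimage permutations. -/
theorem pushforward_uniform_perm_eq_uniform_type_class {𝒴 : Type*} [Fintype 𝒴]
    [DecidableEq 𝒴] (n : ℕ) (hn : 1 ≤ n) (φ : Fin n → 𝒴) (m : 𝒴 → ℕ)
    (hm : ∀ c : 𝒴, (Finset.univ.filter (fun i => φ i = c)).card = m c) :
    (∀ σ : Equiv.Perm (Fin n), ∀ c : 𝒴,
        (Finset.univ.filter (fun i => (φ ∘ σ) i = c)).card = m c) ∧
    (∀ y : Fin n → 𝒴,
        (∀ c : 𝒴, (Finset.univ.filter (fun i => y i = c)).card = m c) →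
        (Finset.univ.filter (fun σ : Equiv.Perm (Fin n) => φ ∘ σ = y)).card =
          ∏ c : 𝒴, (m c).factorial) := by
  constructor
  · intro σ c
    rw [← hm c, ← Fintype.card_subtype, ← Fintype.card_subtype]
    exact Fintype.card_congr (σ.subtypeEquiv (fun i => by simp))
  · intro y hy
    rw [← Fintype.card_subtype]
    rw [Fintype.card_congr (permFiberEquiv φ y), Fintype.card_pi]
    refine Finset.prod_congr rfl fun c _ => ?_
    have h1 : Fintype.card {i // y i = c} = m c := by
      rw [Fintype.card_subtype]; exact hy c
    have h2 : Fintype.card {i // φ i = c} = m c := by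
      rw [Fintype.card_subtype]; exact hm c
    rw [Fintype.card_equiv (Fintype.equivOfCardEq (h1.trans h2.symm)), h1]
end
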